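/- In Minkowski space, for a solution ψ of the wave equation, the current J_a = T_{ab}A^b + ½(ψ̄∇_aψ + ψ∇_aψ̄) with A = r∂_r satisfies ∇^a J_a = −T_{tt}, where T_{tt} = ½(|∂_tψ|² + |∇_xψ|²) is the energy density. -/

import Mathlib

noncomputable section

open scoped BigOperators
open Complex

/-- Partial derivative in coordinate direction `i` of a complex-valued function on
Minkowski space ℝ⁴ with Cartesian coordinates `(t,x,y,z)`. -/
def pdC (i : Fin 4) (f : (Fin 4 → ℝ) → ℂ) (x : Fin 4 → ℝ) : ℂ :=
  deriv (fun t => f (Function.update x i t)) (x i)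

/-- The diagonal entries of the Minkowski metric `dt² − dx² − dy² − dz²` (which is
its own inverse). -/
def eta : Fin 4 → ℝ := ![1, -1, -1, -1]

/-- The wave stress-energy tensor
`T_{ab} = ∇_{(a}ψ∇_{b)}ψ̄ − ½ η_{ab} ∇^cψ∇_cψ̄` on Minkowski space. -/
def stressT (ψ : (Fin 4 → ℝ) → ℂ) (x : Fin 4 → ℝ) (a b : Fin 4) : ℂ :=
  (pdC a ψ x * starRingEnd ℂ (pdC b ψ x) + pdC b ψ x * starRingEnd ℂ (pdC a ψ x)) / 2
    - (1/2) * (if a = b then (eta a : ℝ) else 0) *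
        ∑ c, (eta c : ℝ) * (pdC c ψ x * starRingEnd ℂ (pdC c ψ x))

/-- The components of the Morawetz vector field `A = r∂_r = x∂_x + y∂_y + z∂_z`. -/
def morA (x : Fin 4 → ℝ) (b : Fin 4) : ℝ := if b = 0 then 0 else x b

/-- The current `J_a = T_{ab}A^b + ½(ψ̄∇_aψ + ψ∇_aψ̄)` (i.e. `q = 1`). -/
def currentJ (ψ : (Fin 4 → ℝ) → ℂ) (x : Fin 4 → ℝ) (a : Fin 4) : ℂ :=
  (∑ b, stressT ψ x a b * (morA x b : ℝ))
    + (1/2) * (starRingEnd ℂ (ψ x) * pdC a ψ x + ψ x * starRingEnd ℂ (pdC a ψ x))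

def HasPdCAt (f : (Fin 4 → ℝ) → ℂ) (x : Fin 4 → ℝ) (i : Fin 4) (v : ℂ) : Prop :=
  HasDerivAt (fun t => f (Function.update x i t)) v (x i)

theorem HasPdCAt.deriv_eq {f x i v} (h : HasPdCAt f x i v) : pdC i f x = v :=
  HasDerivAt.deriv h

theorem hasPdCAt_fderiv {f : (Fin 4 → ℝ) → ℂ} {x i} (hf : DifferentiableAt ℝ f x) :
    HasPdCAt f x i (fderiv ℝ f x (Pi.single i 1)) := by
  have h2 : HasFDerivAt f (fderiv ℝ f x) (Function.update x i (x i)) := by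
    rw [Function.update_eq_self]; exact hf.hasFDerivAt
  exact h2.comp_hasDerivAt (x i) (hasDerivAt_update x i (x i))

theorem pdC_eq_fderiv {f : (Fin 4 → ℝ) → ℂ} {x : Fin 4 → ℝ} {i} (hf : DifferentiableAt ℝ f x) :
    pdC i f x = fderiv ℝ f x (Pi.single i 1) := (hasPdCAt_fderiv hf).deriv_eq

theorem hasPdCAt_base {f : (Fin 4 → ℝ) → ℂ} {x i} (hf : DifferentiableAt ℝ f x) :
    HasPdCAt f x i (pdC i f x) := by
  rw [pdC_eq_fderiv hf]; exact hasPdCAt_fderiv hf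

theorem contDiff_pdC {f : (Fin 4 → ℝ) → ℂ} (hf : ContDiff ℝ (⊤ : ℕ∞) f) (i : Fin 4) :
    ContDiff ℝ (⊤ : ℕ∞) (pdC i f) := by
  have h : pdC i f = fun x => fderiv ℝ f x (Pi.single i 1) :=
    funext fun x => pdC_eq_fderiv (hf.differentiable (by simp) x)
  rw [h]
  exact (ContinuousLinearMap.apply ℝ ℂ (Pi.single i 1)).contDiff.comp (hf.fderiv_right (m := ((⊤ : ℕ∞) : WithTop ℕ∞)) (by simp))

theorem pdC_comm {f : (Fin 4 → ℝ) → ℂ} (hf : ContDiff ℝ (⊤ : ℕ∞) f) (a b : Fin 4) (x : Fin 4 → ℝ) :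
    pdC a (pdC b f) x = pdC b (pdC a f) x := by
  have hd : ∀ c : Fin 4, pdC c f = fun y => fderiv ℝ f y (Pi.single c 1) :=
    fun c => funext fun y => pdC_eq_fderiv (hf.differentiable (by simp) y)
  have hfd : ContDiff ℝ (⊤ : ℕ∞) (fderiv ℝ f) := hf.fderiv_right (by simp)
  have hdiff : ∀ (c : Fin 4), DifferentiableAt ℝ (fun y => fderiv ℝ f y (Pi.single c 1)) x := by
    intro c
    exact ((ContinuousLinearMap.apply ℝ ℂ (Pi.single c 1)).contDiff.comp hfd).differentiable
      (by simp) x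
  have hev : ∀ (c d : Fin 4), pdC c (fun y => fderiv ℝ f y (Pi.single d 1)) x
      = (fderiv ℝ (fderiv ℝ f) x (Pi.single c 1)) (Pi.single d 1) := by
    intro c d
    rw [pdC_eq_fderiv (hdiff d)]
    have h1 : (fun y => fderiv ℝ f y (Pi.single d 1))
        = (ContinuousLinearMap.apply ℝ ℂ (Pi.single d 1)) ∘ (fderiv ℝ f) := rfl
    rw [h1, fderiv_comp _ ((ContinuousLinearMap.apply ℝ ℂ (Pi.single d 1)).differentiableAt)
      ((hfd.differentiable (by simp)) x)]
    simp
  have hsymm := ((hf.contDiffAt (x := x)).isSymmSndFDerivAt (by rw [minSmoothness_of_isRCLikeNormedField]; exact WithTop.coe_le_coe.mpr le_top)).eq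
    (Pi.single a 1) (Pi.single b 1)
  rw [hd b, hev a b, hd a, hev b a]
  exact hsymm

namespace HasPdCAt

variable {f g : (Fin 4 → ℝ) → ℂ} {x : Fin 4 → ℝ} {i : Fin 4} {u v : ℂ}

theorem add (hf : HasPdCAt f x i u) (hg : HasPdCAt g x i v) :
    HasPdCAt (fun y => f y + g y) x i (u + v) := HasDerivAt.add hf hg

theorem sub (hf : HasPdCAt f x i u) (hg : HasPdCAt g x i v) :
    HasPdCAt (fun y => f y - g y) x i (u - v) := HasDerivAt.sub hf hg

theorem mul (hf : HasPdCAt f x i u) (hg : HasPdCAt g x i v) :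
    HasPdCAt (fun y => f y * g y) x i (u * g x + f x * v) := by
  have := HasDerivAt.mul (c := fun t => f (Function.update x i t))
    (d := fun t => g (Function.update x i t)) hf hg
  simpa [Function.update_eq_self, Pi.mul_def, HasPdCAt] using this

theorem const_mul (c : ℂ) (hf : HasPdCAt f x i u) :
    HasPdCAt (fun y => c * f y) x i (c * u) := HasDerivAt.const_mul c hf

theorem div_const (hf : HasPdCAt f x i u) (c : ℂ) :
    HasPdCAt (fun y => f y / c) x i (u / c) := HasDerivAt.div_const hf c

theorem conj (hf : HasPdCAt f x i u) :
    HasPdCAt (fun y => starRingEnd ℂ (f y)) x i (starRingEnd ℂ u) := by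
  have := (Complex.conjCLE.hasFDerivAt).comp_hasDerivAt (x i) hf
  simpa [Function.comp_def, Complex.conjCAE_apply, HasPdCAt] using this

theorem sum {F : Fin 4 → (Fin 4 → ℝ) → ℂ} {V : Fin 4 → ℂ}
    (h : ∀ b, HasPdCAt (F b) x i (V b)) :
    HasPdCAt (fun y => ∑ b, F b y) x i (∑ b, V b) :=
  HasDerivAt.fun_sum fun b _ => h b

end HasPdCAt

theorem hasPdCAt_morA (x : Fin 4 → ℝ) (i b : Fin 4) :
    HasPdCAt (fun y => ((morA y b : ℝ) : ℂ)) x i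
      (if b = 0 then 0 else if i = b then 1 else 0) := by
  unfold HasPdCAt morA
  by_cases hb : b = 0
  · simpa [hb] using hasDerivAt_const (x i) ((0:ℝ):ℂ)
  · simp only [hb, if_false]
    by_cases hib : i = b
    · subst hib
      simp only [Function.update_self, if_pos rfl]
      simpa using (hasDerivAt_id (x i)).ofReal_comp
    · have hbi : b ≠ i := fun h => hib h.symm
      simp only [Function.update_of_ne hbi, if_neg hib]
      exact hasDerivAt_const _ _

/-- For a solution `ψ` of the wave equation on Minkowski space, the Morawetz current
with `A = r∂_r` and `q = 1` satisfies `∇^a J_a = −T_{tt}`, where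
`T_{tt} = ½(|∂_tψ|² + |∇_xψ|²) = ½ Σ_a |∂_aψ|²` is the energy density. -/
theorem morawetz_minkowski (ψ : (Fin 4 → ℝ) → ℂ)
    (hψ : ContDiff ℝ (⊤ : ℕ∞) ψ)
    (hwave : ∀ x, ∑ c, (eta c : ℝ) * pdC c (fun y => pdC c ψ y) x = 0) :
    ∀ x, ∑ a, (eta a : ℝ) * pdC a (fun y => currentJ ψ y a) x
      = -(1/2) * ∑ a, pdC a ψ x * starRingEnd ℂ (pdC a ψ x) := by
  intro x
  have hψd : Differentiable ℝ ψ := hψ.differentiable (by simp)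
  have hpd : ∀ c : Fin 4, Differentiable ℝ (pdC c ψ) :=
    fun c => (contDiff_pdC hψ c).differentiable (by simp)
  have hp : ∀ d c : Fin 4, HasPdCAt (pdC c ψ) x d (pdC d (pdC c ψ) x) :=
    fun d c => hasPdCAt_base (hpd c x)
  have hb : ∀ d : Fin 4, HasPdCAt ψ x d (pdC d ψ x) := fun d => hasPdCAt_base (hψd x)
  have hS : ∀ a b : Fin 4, HasPdCAt (fun y => stressT ψ y a b) x a
      (((pdC a (pdC a ψ) x * starRingEnd ℂ (pdC b ψ x)
          + pdC a ψ x * starRingEnd ℂ (pdC a (pdC b ψ) x))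
        + (pdC a (pdC b ψ) x * starRingEnd ℂ (pdC a ψ x)
          + pdC b ψ x * starRingEnd ℂ (pdC a (pdC a ψ) x))) / 2
       - ((1/2 : ℂ) * ((if a = b then (_root_.eta a : ℝ) else 0) : ℝ)) *
          ∑ c, ((_root_.eta c : ℝ) : ℂ) *
            (pdC a (pdC c ψ) x * starRingEnd ℂ (pdC c ψ x)
              + pdC c ψ x * starRingEnd ℂ (pdC a (pdC c ψ) x))) := by
    intro a b
    exact ((((hp a a).mul ((hp a b).conj)).add (((hp a b).mul ((hp a a).conj)))).div_const 2).sub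
      (HasPdCAt.const_mul _ (HasPdCAt.sum fun c => HasPdCAt.const_mul _ ((hp a c).mul ((hp a c).conj))))
  have hJ := fun a : Fin 4 => HasPdCAt.deriv_eq (f := fun y => currentJ ψ y a) (x := x) (i := a)
    ((HasPdCAt.sum fun b => (hS a b).mul (hasPdCAt_morA x a b)).add
     (HasPdCAt.const_mul (1/2) (((hb a).conj.mul (hp a a)).add ((hb a).mul ((hp a a).conj)))))
  simp only [Fin.sum_univ_four]
  rw [hJ 0, hJ 1, hJ 2, hJ 3]
  simp only [stressT, Fin.sum_univ_four]
  simp (config := { decide := true }) only [_root_.eta, morA, Matrix.cons_val_zero,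
    Matrix.cons_val_one, Matrix.head_cons, Matrix.cons_val_two, Matrix.tail_cons,
    Matrix.cons_val_three, if_true, if_false]
  push_cast
  have hsym := fun a b => pdC_comm hψ a b x
  have hsymc := fun a b => congrArg (starRingEnd ℂ) (pdC_comm hψ a b x)
  have hw : pdC 0 (pdC 0 ψ) x - pdC 1 (pdC 1 ψ) x - pdC 2 (pdC 2 ψ) x
      - pdC 3 (pdC 3 ψ) x = 0 := by
    have h := hwave x
    simp (config := { decide := true }) only [Fin.sum_univ_four, _root_.eta,
      Matrix.cons_val_zero, Matrix.cons_val_one, Matrix.head_cons, Matrix.cons_val_two,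
      Matrix.tail_cons, Matrix.cons_val_three] at h
    push_cast at h
    linear_combination h
  have hwc : (starRingEnd ℂ) (pdC 0 (pdC 0 ψ) x) - (starRingEnd ℂ) (pdC 1 (pdC 1 ψ) x)
      - (starRingEnd ℂ) (pdC 2 (pdC 2 ψ) x) - (starRingEnd ℂ) (pdC 3 (pdC 3 ψ) x) = 0 := by
    simpa [map_sub] using congrArg (starRingEnd ℂ) hw
  linear_combination (norm := ring_nf)
    (1/2) * (starRingEnd ℂ) (ψ x) * hw
    + (1/2) * ψ x * hwc
    + (x 1 : ℂ) * ((1/2) * (starRingEnd ℂ) (pdC 1 ψ x) * hw + (1/2) * pdC 1 ψ x * hwc + (1/2) * (starRingEnd ℂ) (pdC 0 ψ x) * hsym 0 1 + (1/2) * pdC 0 ψ x * hsymc 0 1 + (-(1/2)) * (starRingEnd ℂ) (pdC 2 ψ x) * hsym 2 1 + (-(1/2)) * pdC 2 ψ x * hsymc 2 1 + (-(1/2)) * (starRingEnd ℂ) (pdC 3 ψ x) * hsym 3 1 + (-(1/2)) * pdC 3 ψ x * hsymc 3 1)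
    + (x 2 : ℂ) * ((1/2) * (starRingEnd ℂ) (pdC 2 ψ x) * hw + (1/2) * pdC 2 ψ x * hwc + (1/2) * (starRingEnd ℂ) (pdC 0 ψ x) * hsym 0 2 + (1/2) * pdC 0 ψ x * hsymc 0 2 + (-(1/2)) * (starRingEnd ℂ) (pdC 1 ψ x) * hsym 1 2 + (-(1/2)) * pdC 1 ψ x * hsymc 1 2 + (-(1/2)) * (starRingEnd ℂ) (pdC 3 ψ x) * hsym 3 2 + (-(1/2)) * pdC 3 ψ x * hsymc 3 2)
    + (x 3 : ℂ) * ((1/2) * (starRingEnd ℂ) (pdC 3 ψ x) * hw + (1/2) * pdC 3 ψ x * hwc + (1/2) * (starRingEnd ℂ) (pdC 0 ψ x) * hsym 0 3 + (1/2) * pdC 0 ψ x * hsymc 0 3 + (-(1/2)) * (starRingEnd ℂ) (pdC 1 ψ x) * hsym 1 3 + (-(1/2)) * pdC 1 ψ x * hsymc 1 3 + (-(1/2)) * (starRingEnd ℂ) (pdC 2 ψ x) * hsym 2 3 + (-(1/2)) * pdC 2 ψ x * hsymc 2 3)
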